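/- Let p ≥ 1, let E₁,…,Eₙ be normed spaces over 𝕂, and let A : E₁×⋯×Eₙ → 𝕂 be an n-linear form such that, for some C ≥ 0, ( Σ_{j=1}^m |A(x_{1,j},…,x_{n,j})|^p )^{1/p} ≤ C · ( sup_{φ_l ∈ E_l', ‖φ_l‖ ≤ 1} Σ_{j=1}^m |φ₁(x_{1,j})⋯φₙ(x_{n,j})|^p )^{1/p} for every m ∈ ℕ and all x_{l,j} ∈ E_l. Then the linearization f = A_L satisfies |f(u)| ≤ C·σ_p(u) for every u ∈ E₁⊗⋯⊗Eₙ. (Together with the converse direction, this shows that the dual of (E₁⊗⋯⊗Eₙ, σ_p) is isometrically the space of p-semi-integral n-linear forms.) -/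

import Mathlib

open scoped TensorProduct
open PiTensorProduct

/-- The `ℓ_q` norm of a finite family of scalars, where `q` is the conjugate exponent
of `p` (`1/p + 1/q = 1`, with `q = ∞`, i.e. the sup norm, when `p = 1`). -/
noncomputable def lqNorm {𝕜 : Type*} [RCLike 𝕜] (p : ℝ) {m : ℕ} (lam : Fin m → 𝕜) : ℝ :=
  if p = 1 then ⨆ j, ‖lam j‖ else (∑ j, ‖lam j‖ ^ (p / (p - 1))) ^ ((p - 1) / p)

/-- `sup_{‖φ_l‖ ≤ 1} Σ_j |φ₁(x_{1,j}) ⋯ φₙ(x_{n,j})|^p`. -/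
noncomputable def supTerm (𝕜 : Type*) [RCLike 𝕜] {n : ℕ} {E : Fin n → Type*}
    [∀ i, NormedAddCommGroup (E i)] [∀ i, NormedSpace 𝕜 (E i)]
    (p : ℝ) {m : ℕ} (x : Fin m → Π i, E i) : ℝ :=
  ⨆ φ : {φ : Π i, E i →L[𝕜] 𝕜 // ∀ i, ‖φ i‖ ≤ 1},
    ∑ j, (∏ i, ‖φ.1 i (x j i)‖) ^ p

/-- The tensor norm `σ_p` on `E₁ ⊗ ⋯ ⊗ Eₙ`. -/
noncomputable def sigmaNorm {𝕜 : Type*} [RCLike 𝕜] {n : ℕ} {E : Fin n → Type*}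
    [∀ i, NormedAddCommGroup (E i)] [∀ i, NormedSpace 𝕜 (E i)]
    (p : ℝ) (u : ⨂[𝕜] i, E i) : ℝ :=
  sInf { r : ℝ | ∃ (m : ℕ) (lam : Fin m → 𝕜) (x : Fin m → Π i, E i),
    u = (∑ j, lam j • ⨂ₜ[𝕜] i, x j i) ∧
    r = lqNorm p lam * (supTerm 𝕜 p x) ^ (1/p) }

/-! For a representation `u = Σ_j λ_j x_{1,j} ⊗ ⋯ ⊗ x_{n,j}`, the triangle inequality and Hölder's
inequality give `|A_L(u)| ≤ ‖λ‖_q (Σ_j |A(x_{1,j},…,x_{n,j})|^p)^{1/p}`, and the semi-integrality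
of `A` bounds the last factor by `C` times the weak `ℓ_p` quantity. Taking the infimum over
all representations gives `|A_L(u)| ≤ C σ_p(u)`. -/

theorem le_mul_sInf_of_forall_le_mul {a C : ℝ} {S : Set ℝ} (hC : 0 ≤ C) (hS : S.Nonempty)
    (h : ∀ r ∈ S, a ≤ C * r) : a ≤ C * sInf S := by
  rw [← smul_eq_mul, ← Real.sInf_smul_of_nonneg hC]
  exact le_csInf hS.smul_set (by rintro _ ⟨r, hr, rfl⟩; exact h r hr)

section lqNorm

variable {𝕜 : Type*} [RCLike 𝕜] {m : ℕ}

theorem lqNorm_of_one_lt {p : ℝ} (hp : 1 < p) (lam : Fin m → 𝕜) :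
    lqNorm p lam = (∑ j, ‖lam j‖ ^ p.conjExponent) ^ (1 / p.conjExponent) := by
  rw [lqNorm, if_neg hp.ne', Real.conjExponent, one_div_div]

theorem lqNorm_nonneg (p : ℝ) (lam : Fin m → 𝕜) : 0 ≤ lqNorm p lam := by
  unfold lqNorm
  split_ifs
  · exact Real.iSup_nonneg fun j => norm_nonneg _
  · exact Real.rpow_nonneg (Finset.sum_nonneg fun j _ => Real.rpow_nonneg (norm_nonneg _) _) _

/-- Hölder's inequality for the pair of conjugate exponents `q` and `p`, including `p = 1`. -/
theorem sum_norm_mul_le_lqNorm_mul {p : ℝ} (hp : 1 ≤ p) (lam : Fin m → 𝕜) {a : Fin m → ℝ}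
    (ha : ∀ j, 0 ≤ a j) : ∑ j, ‖lam j‖ * a j ≤ lqNorm p lam * (∑ j, a j ^ p) ^ (1 / p) := by
  rcases hp.eq_or_lt with rfl | hp
  · have hle : ∀ j, ‖lam j‖ ≤ ⨆ j, ‖lam j‖ := le_ciSup (Set.finite_range _).bddAbove
    simp only [lqNorm, if_pos, Real.rpow_one, div_one, Finset.mul_sum]
    exact Finset.sum_le_sum fun j _ => mul_le_mul_of_nonneg_right (hle j) (ha j)
  · rw [lqNorm_of_one_lt hp]
    exact Real.inner_le_Lp_mul_Lq_of_nonneg _ (Real.HolderConjugate.conjExponent hp).symm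
      (fun j _ => norm_nonneg _) (fun j _ => ha j)

end lqNorm

section TensorRepresentation

variable {n : ℕ} {E : Fin n → Type*} [∀ i, AddCommMonoid (E i)]

theorem PiTensorProduct.exists_eq_sum_smul_tprod {R : Type*} [CommSemiring R]
    [∀ i, Module R (E i)] (u : ⨂[R] i, E i) :
    ∃ (m : ℕ) (lam : Fin m → R) (x : Fin m → Π i, E i), u = ∑ j, lam j • ⨂ₜ[R] i, x j i := by
  induction u using PiTensorProduct.induction_on with
  | smul_tprod r f => exact ⟨1, fun _ => r, fun _ => f, by simp⟩
  | add v w hv hw =>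
    obtain ⟨m₁, lam₁, x₁, rfl⟩ := hv
    obtain ⟨m₂, lam₂, x₂, rfl⟩ := hw
    refine ⟨m₁ + m₂, Fin.append lam₁ lam₂, Fin.append x₁ x₂, ?_⟩
    simp only [Fin.sum_univ_add, Fin.append_left, Fin.append_right]

theorem norm_lift_sum_smul_tprod_le {𝕜 : Type*} [RCLike 𝕜] [∀ i, Module 𝕜 (E i)]
    (A : MultilinearMap 𝕜 E 𝕜) {p : ℝ} (hp : 1 ≤ p) {m : ℕ}
    (lam : Fin m → 𝕜) (x : Fin m → Π i, E i) :
    ‖lift A (∑ j, lam j • ⨂ₜ[𝕜] i, x j i)‖ ≤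
      lqNorm p lam * (∑ j, ‖A (x j)‖ ^ p) ^ (1 / p) := by
  calc ‖lift A (∑ j, lam j • ⨂ₜ[𝕜] i, x j i)‖
      = ‖∑ j, lam j • A (x j)‖ := by simp only [map_sum, map_smul, lift.tprod]
    _ ≤ ∑ j, ‖lam j‖ * ‖A (x j)‖ := by
        simpa only [norm_smul] using norm_sum_le Finset.univ fun j => lam j • A (x j)
    _ ≤ lqNorm p lam * (∑ j, ‖A (x j)‖ ^ p) ^ (1 / p) :=
      sum_norm_mul_le_lqNorm_mul hp lam fun j => norm_nonneg _

end TensorRepresentation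

theorem sigma_bounded_of_semiIntegral_general {𝕜 : Type*} [RCLike 𝕜] {n : ℕ}
    (E : Fin n → Type*) [∀ i, NormedAddCommGroup (E i)] [∀ i, NormedSpace 𝕜 (E i)]
    (p : ℝ) (hp : 1 ≤ p) (C : ℝ) (hC : 0 ≤ C)
    (A : MultilinearMap 𝕜 E 𝕜)
    (hA : ∀ (m : ℕ) (x : Fin m → Π i, E i),
      (∑ j, ‖A (x j)‖ ^ p) ^ (1/p) ≤ C * (supTerm 𝕜 p x) ^ (1/p)) :
    ∀ u : ⨂[𝕜] i, E i, ‖PiTensorProduct.lift A u‖ ≤ C * sigmaNorm p u := by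
  intro u
  obtain ⟨m, lam, x, hu⟩ := exists_eq_sum_smul_tprod u
  refine le_mul_sInf_of_forall_le_mul hC ⟨_, m, lam, x, hu, rfl⟩ ?_
  rintro _ ⟨m', lam', x', rfl, rfl⟩
  calc ‖lift A (∑ j, lam' j • ⨂ₜ[𝕜] i, x' j i)‖
      ≤ lqNorm p lam' * (∑ j, ‖A (x' j)‖ ^ p) ^ (1 / p) := norm_lift_sum_smul_tprod_le A hp lam' x'
    _ ≤ lqNorm p lam' * (C * (supTerm 𝕜 p x') ^ (1 / p)) :=
      mul_le_mul_of_nonneg_left (hA m' x') (lqNorm_nonneg p lam')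
    _ = C * (lqNorm p lam' * (supTerm 𝕜 p x') ^ (1 / p)) := mul_left_comm _ _ _

/-- If an `n`-linear form `A` is `p`-semi-integral with constant `C` (in the sense of the
displayed inequality), then its linearization `f = A_L` satisfies `|f(u)| ≤ C·σ_p(u)`. -/
theorem sigma_bounded_of_semiIntegral {𝕜 : Type*} [RCLike 𝕜] {n : ℕ} (hn : 1 ≤ n)
    (E : Fin n → Type*) [∀ i, NormedAddCommGroup (E i)] [∀ i, NormedSpace 𝕜 (E i)]
    (p : ℝ) (hp : 1 ≤ p) (C : ℝ) (hC : 0 ≤ C)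
    (A : MultilinearMap 𝕜 E 𝕜)
    (hA : ∀ (m : ℕ) (x : Fin m → Π i, E i),
      (∑ j, ‖A (x j)‖ ^ p) ^ (1/p) ≤ C * (supTerm 𝕜 p x) ^ (1/p)) :
    ∀ u : ⨂[𝕜] i, E i, ‖PiTensorProduct.lift A u‖ ≤ C * sigmaNorm p u :=
  sigma_bounded_of_semiIntegral_general E p hp C hC A hA
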